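/- Let G be a finite simple graph and 𝓡 a finite family of subsets of V(G) (called regions) such that every vertex of G lies in some region and every edge of G has both endpoints in some common region. For R ∈ 𝓡, let ∂(R) = R ∩ ⋃_{R' ∈ 𝓡, R' ≠ R} R' be the set of vertices of R shared with other regions. Let ∇ ⊆ V(G) be a set of marked vertices and set ∇(R) = ∂(R) ∪ (∇ ∩ R). For each R ∈ 𝓡 let H_R be a finite simple graph with V(H_R) ∩ V(G) = ∇(R), with the new vertex sets V(H_R) ∖ V(G) pairwise disjoint over distinct regions, such that for all x, y ∈ ∇(R): x and y are connected in H_R if and only if x and y are connected in the induced subgraph G[R]. Then for all u, v ∈ ⋃_{R ∈ 𝓡} ∇(R): u and v are connected in the union graph H = ⋃_{R ∈ 𝓡} H_R if and only if u and v are connected in G. -/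

import Mathlib

/-!
A walk in one graph is cut into maximal stretches that stay inside a single piece
(a region of `G`, or a connector `H_R`). Consecutive stretches lie in different pieces, so
the vertex where they meet lies in two pieces, hence is a portal of both. Each stretch
therefore joins two portals of its piece, and the connectivity hypothesis replaces it by a
path in the other graph. The argument is symmetric: it turns walks of `G` into walks of
`⋃ H_R` as well as the converse.
-/

open scoped Classical

/-- A finite simple graph on a subset of an ambient vertex type `U`. -/
structure FinGraph (U : Type) where
  verts : Finset U
  G : SimpleGraph U
  support : ∀ ⦃u v : U⦄, G.Adj u v → u ∈ verts ∧ v ∈ verts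

/-- The restriction (induced subgraph) of a `SimpleGraph` to a finite vertex set. -/
def SimpleGraph.restrictTo {U : Type} (G : SimpleGraph U) (s : Finset U) : SimpleGraph U where
  Adj u v := G.Adj u v ∧ u ∈ s ∧ v ∈ s
  symm := ⟨fun u v h => ⟨h.1.symm, h.2.2, h.2.1⟩⟩
  loopless := ⟨fun u h => G.loopless.irrefl u h.1⟩

/-- The boundary `∂(R)` of a region `R` with respect to a family `𝓡` of regions:
the vertices of `R` lying in some other region of `𝓡`. -/
noncomputable def bdryIn {U : Type} [DecidableEq U] (𝓡 : Finset (Finset U)) (R : Finset U) :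
    Finset U :=
  R.filter fun v => ∃ R' ∈ 𝓡, R' ≠ R ∧ v ∈ R'

namespace SimpleGraph

variable {V ι : Type*}

/-- `A` is covered by the pieces `A' i` (`i ∈ I`), living on the vertex sets `P i`, any two
of which meet only in portals `S i`; moreover portals joined inside a piece are joined in `B`. -/
structure PortalCover (A B : SimpleGraph V) (I : Set ι) (A' : ι → SimpleGraph V)
    (P S : ι → Set V) : Prop where
  exists_adj : ∀ ⦃a b⦄, A.Adj a b → ∃ i ∈ I, (A' i).Adj a b
  mem_of_adj : ∀ i ∈ I, ∀ ⦃a b⦄, (A' i).Adj a b → a ∈ P i ∧ b ∈ P i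
  portals_subset : ∀ i ∈ I, S i ⊆ P i
  inter_subset : ∀ i ∈ I, ∀ j ∈ I, i ≠ j → P i ∩ P j ⊆ S i
  reachable : ∀ i ∈ I, ∀ x ∈ S i, ∀ y ∈ S i, (A' i).Reachable x y → B.Reachable x y

namespace PortalCover

variable {A B : SimpleGraph V} {I : Set ι} {A' : ι → SimpleGraph V} {P S : ι → Set V}

theorem exists_portal_of_walk (hC : PortalCover A B I A' P S) {a w : V} (p : A.Walk a w)
    {j : ι} (hj : j ∈ I) (hw : w ∈ S j) {i : ι} (hi : i ∈ I) (ha : a ∈ P i) :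
    ∃ x ∈ S i, (A' i).Reachable a x ∧ B.Reachable x w := by
  induction p generalizing i with
  | nil =>
    by_cases hij : i = j
    · subst hij
      exact ⟨_, hw, .rfl, .rfl⟩
    · exact ⟨_, hC.inter_subset i hi j hj hij ⟨ha, hC.portals_subset j hj hw⟩, .rfl, .rfl⟩
  | @cons a b w hab q ih =>
    obtain ⟨k, hk, hadj⟩ := hC.exists_adj hab
    obtain ⟨haP, hbP⟩ := hC.mem_of_adj k hk hadj
    obtain ⟨x, hx, hbx, hxw⟩ := ih hw hk hbP
    have hax : (A' k).Reachable a x := hadj.reachable.trans hbx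
    by_cases hki : k = i
    · subst hki
      exact ⟨x, hx, hax, hxw⟩
    · -- the walk leaves the piece `i` at `a`, which is therefore a portal of `i` and of `k`
      have haS : a ∈ S k := hC.inter_subset k hk i hi hki ⟨haP, ha⟩
      exact ⟨a, hC.inter_subset i hi k hk (Ne.symm hki) ⟨ha, haP⟩, .rfl,
        (hC.reachable k hk a haS x hx hax).trans hxw⟩

theorem reachable_of_reachable (hC : PortalCover A B I A' P S) {i j : ι} (hi : i ∈ I)
    (hj : j ∈ I) {u v : V} (hu : u ∈ S i) (hv : v ∈ S j) (h : A.Reachable u v) :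
    B.Reachable u v := by
  obtain ⟨p⟩ := h
  obtain ⟨x, hx, hux, hxv⟩ := hC.exists_portal_of_walk p hj hv hi (hC.portals_subset i hi hu)
  exact (hC.reachable i hi u hu x hx hux).trans hxv

end PortalCover

theorem restrictTo_le {U : Type} (G : SimpleGraph U) (s : Finset U) : G.restrictTo s ≤ G :=
  fun _ _ h => h.1

end SimpleGraph

open SimpleGraph

section Division

variable {U : Type} [DecidableEq U]

/-- The set `∇(R) = ∂(R) ∪ (∇ ∩ R)` of portals of the region `R`. -/
noncomputable def portalsIn (𝓡 : Finset (Finset U)) (nab R : Finset U) : Finset U :=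
  bdryIn 𝓡 R ∪ (nab ∩ R)

theorem portalsIn_subset (𝓡 : Finset (Finset U)) (nab R : Finset U) :
    portalsIn 𝓡 nab R ⊆ R :=
  Finset.union_subset (Finset.filter_subset _ _) Finset.inter_subset_right

theorem mem_portalsIn_of_mem_of_mem {𝓡 : Finset (Finset U)} (nab : Finset U)
    {R R' : Finset U} (hR' : R' ∈ 𝓡) (hne : R' ≠ R) {v : U} (hv : v ∈ R) (hv' : v ∈ R') :
    v ∈ portalsIn 𝓡 nab R :=
  Finset.mem_union_left _ (Finset.mem_filter.2 ⟨hv, R', hR', hne, hv'⟩)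

theorem portalCover_regions (G : FinGraph U) (𝓡 : Finset (Finset U))
    (hedge : ∀ ⦃u v⦄, G.G.Adj u v → ∃ R ∈ 𝓡, u ∈ R ∧ v ∈ R)
    (nab : Finset U) (H : Finset U → FinGraph U)
    (hHconn : ∀ R ∈ 𝓡, ∀ x ∈ portalsIn 𝓡 nab R, ∀ y ∈ portalsIn 𝓡 nab R,
      (G.G.restrictTo R).Reachable x y → (H R).G.Reachable x y) :
    PortalCover G.G (⨆ R ∈ 𝓡, (H R).G) 𝓡 (fun R => G.G.restrictTo R) (fun R => R)
      (fun R => portalsIn 𝓡 nab R) where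
  exists_adj _ _ h := by
    obtain ⟨R, hR, hu, hv⟩ := hedge h
    exact ⟨R, hR, h, hu, hv⟩
  mem_of_adj _ _ _ _ h := h.2
  portals_subset R _ := portalsIn_subset 𝓡 nab R
  inter_subset R _ R' hR' hne _ hv := mem_portalsIn_of_mem_of_mem nab hR' (Ne.symm hne) hv.1 hv.2
  reachable R hR x hx y hy hxy :=
    (hHconn R hR x hx y hy hxy).mono (le_iSup₂ (f := fun R (_ : R ∈ 𝓡) => (H R).G) R hR)

theorem portalCover_connectors (G : FinGraph U) (𝓡 : Finset (Finset U))
    (nab : Finset U) (H : Finset U → FinGraph U)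
    (hHverts : ∀ R ∈ 𝓡, (H R).verts ∩ G.verts = portalsIn 𝓡 nab R)
    (hHdisj : ∀ R ∈ 𝓡, ∀ R' ∈ 𝓡, R ≠ R' →
      Disjoint ((H R).verts \ G.verts) ((H R').verts \ G.verts))
    (hHconn : ∀ R ∈ 𝓡, ∀ x ∈ portalsIn 𝓡 nab R, ∀ y ∈ portalsIn 𝓡 nab R,
      (H R).G.Reachable x y → (G.G.restrictTo R).Reachable x y) :
    PortalCover (⨆ R ∈ 𝓡, (H R).G) G.G 𝓡 (fun R => (H R).G) (fun R => (H R).verts)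
      (fun R => portalsIn 𝓡 nab R) where
  exists_adj _ _ h := by simpa only [iSup_adj, exists_prop, Finset.mem_coe] using h
  mem_of_adj R _ _ _ h := (H R).support h
  portals_subset R hR := by
    simpa only [← hHverts R hR, Finset.coe_inter] using Set.inter_subset_left
  inter_subset R hR R' hR' hne v hv := by
    have hvG : v ∈ G.verts := by
      by_contra hvG
      exact Finset.disjoint_left.1 (hHdisj R hR R' hR' hne)
        (Finset.mem_sdiff.2 ⟨hv.1, hvG⟩) (Finset.mem_sdiff.2 ⟨hv.2, hvG⟩)
    simp only [Finset.mem_coe, ← hHverts R hR, Finset.mem_inter]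
    exact ⟨hv.1, hvG⟩
  reachable R hR x hx y hy hxy := (hHconn R hR x hx y hy hxy).mono (G.G.restrictTo_le R)

end Division

theorem union_of_connectors_preserves_connectivity_general {U : Type} [DecidableEq U]
    (G : FinGraph U) (𝓡 : Finset (Finset U))
    (hedge : ∀ ⦃u v⦄, G.G.Adj u v → ∃ R ∈ 𝓡, u ∈ R ∧ v ∈ R)
    (nab : Finset U)
    (H : Finset U → FinGraph U)
    (hHverts : ∀ R ∈ 𝓡, (H R).verts ∩ G.verts = bdryIn 𝓡 R ∪ (nab ∩ R))
    (hHdisj : ∀ R ∈ 𝓡, ∀ R' ∈ 𝓡, R ≠ R' →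
      Disjoint ((H R).verts \ G.verts) ((H R').verts \ G.verts))
    (hHconn : ∀ R ∈ 𝓡, ∀ x ∈ bdryIn 𝓡 R ∪ (nab ∩ R), ∀ y ∈ bdryIn 𝓡 R ∪ (nab ∩ R),
      ((H R).G.Reachable x y ↔ (G.G.restrictTo R).Reachable x y))
    (u v : U)
    (hu : ∃ R ∈ 𝓡, u ∈ bdryIn 𝓡 R ∪ (nab ∩ R))
    (hv : ∃ R ∈ 𝓡, v ∈ bdryIn 𝓡 R ∪ (nab ∩ R)) :
    (⨆ R ∈ 𝓡, (H R).G).Reachable u v ↔ G.G.Reachable u v := by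
  obtain ⟨Ru, hRu, hu⟩ := hu
  obtain ⟨Rv, hRv, hv⟩ := hv
  have hconnectors := portalCover_connectors G 𝓡 nab H hHverts hHdisj
    fun R hR x hx y hy => (hHconn R hR x hx y hy).1
  have hregions := portalCover_regions G 𝓡 hedge nab H
    fun R hR x hx y hy => (hHconn R hR x hx y hy).2
  exact ⟨hconnectors.reachable_of_reachable hRu hRv hu hv,
    hregions.reachable_of_reachable hRu hRv hu hv⟩

/-- given a division `𝓡` of `G`, a set `∇` of marked vertices,
`∇(R) = ∂(R) ∪ (∇ ∩ R)`, and graphs `H_R` (with `V(H_R) ∩ V(G) = ∇(R)` and pairwise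
disjoint new vertices) preserving connectivity between vertices of `∇(R)` within `G[R]`,
two vertices of `⋃_R ∇(R)` are connected in `⋃_R H_R` iff they are connected in `G`. -/
theorem union_of_connectors_preserves_connectivity {U : Type} [DecidableEq U]
    (G : FinGraph U) (𝓡 : Finset (Finset U))
    (hsub : ∀ R ∈ 𝓡, R ⊆ G.verts)
    (hcover : ∀ v ∈ G.verts, ∃ R ∈ 𝓡, v ∈ R)
    (hedge : ∀ ⦃u v⦄, G.G.Adj u v → ∃ R ∈ 𝓡, u ∈ R ∧ v ∈ R)
    (nab : Finset U) (hnab : nab ⊆ G.verts)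
    (H : Finset U → FinGraph U)
    (hHverts : ∀ R ∈ 𝓡, (H R).verts ∩ G.verts = bdryIn 𝓡 R ∪ (nab ∩ R))
    (hHdisj : ∀ R ∈ 𝓡, ∀ R' ∈ 𝓡, R ≠ R' →
      Disjoint ((H R).verts \ G.verts) ((H R').verts \ G.verts))
    (hHconn : ∀ R ∈ 𝓡, ∀ x ∈ bdryIn 𝓡 R ∪ (nab ∩ R), ∀ y ∈ bdryIn 𝓡 R ∪ (nab ∩ R),
      ((H R).G.Reachable x y ↔ (G.G.restrictTo R).Reachable x y))
    (u v : U)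
    (hu : ∃ R ∈ 𝓡, u ∈ bdryIn 𝓡 R ∪ (nab ∩ R))
    (hv : ∃ R ∈ 𝓡, v ∈ bdryIn 𝓡 R ∪ (nab ∩ R)) :
    (⨆ R ∈ 𝓡, (H R).G).Reachable u v ↔ G.G.Reachable u v :=
  union_of_connectors_preserves_connectivity_general G 𝓡 hedge nab H hHverts hHdisj hHconn u v hu hv
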